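/- arXiv:0803.0500 — 3 statements merged into one kernel-verified Lean document; each statement's English description precedes it below -/
import Mathlib

section
/- Let m ≥ 2 be fixed, and let ν be a function on knot-indices satisfying the abstract inequalities: for all n, r coprime to m with n > r and for k₊ the least nonnegative integer with gcd(n−r+k₊, m)=1, |ν(n) − ν(r) − (m−1)(n − r + k₊ − 1)/2| ≤ (k₊+1)(m−1)/2; and for k₋ the greatest negative integer with gcd(n−r+k₋, m)=1 and |k₋| ≤ m−1, |ν(n) − ν(r) − (m−1)(n − r + k₋ − 1)/2| ≤ (|k₋|+1)(m−1)/2. Then h(n) := ν(n) − (m−1)n/2 satisfies −(m−1) ≤ h(n) − h(r) ≤ 0 for all such n > r. -/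
/-!
Write `h x = ν x - (m - 1) x / 2`. Expanding the two absolute-value bounds, the shift cancels:
the lower half of the first one reads `h n - h r ≥ -(m - 1)`, and the upper half of the
second one, using `|k₋| = -k₋`, reads `h n - h r ≤ 0`. So it only remains to see that `k₊`
and `k₋` exist with `|k₋| ≤ m - 1`: the residue `ρ = r mod m` lies in `[1, m - 1]`, and both
`n - r + ρ` and `n - r + ρ - m` are congruent to `n`, hence coprime to `m`.
-/

lemma Int.gcd_eq_gcd_of_modEq {a b m : ℤ} (h : a ≡ b [ZMOD m]) : a.gcd m = b.gcd m := by
  rw [← Int.gcd_emod, h, Int.gcd_emod]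

lemma Int.emod_pos_of_gcd_eq_one {r m : ℤ} (hr : r.gcd m = 1) (hm : 1 < m) : 0 < r % m := by
  refine (Int.emod_nonneg r (by omega)).lt_of_ne fun h ↦ ?_
  have hdvd : m ∣ r := Int.dvd_of_emod_eq_zero h.symm
  rw [Int.gcd_eq_natAbs_right hdvd] at hr
  omega

lemma gcd_sub_add_eq_one_of_modEq {n r k m : ℤ} (hn : n.gcd m = 1) (hk : k ≡ r [ZMOD m]) :
    (n - r + k).gcd m = 1 := by
  rw [← hn]
  exact Int.gcd_eq_gcd_of_modEq (by simpa using (hk.add_left (n - r)))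

lemma exists_isLeast_nonneg_gcd_sub_add_eq_one {n m : ℤ} (hn : n.gcd m = 1) (hm : m ≠ 0)
    (r : ℤ) :
    ∃ kp, IsLeast {k : ℤ | 0 ≤ k ∧ (n - r + k).gcd m = 1} kp :=
  Int.exists_least_of_bdd ⟨0, fun _ hk ↦ hk.1⟩
    ⟨r % m, Int.emod_nonneg r hm, gcd_sub_add_eq_one_of_modEq hn (Int.mod_modEq r m)⟩

lemma exists_isGreatest_neg_gcd_sub_add_eq_one {n r m : ℤ} (hn : n.gcd m = 1)
    (hr : r.gcd m = 1) (hm : 1 < m) :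
    ∃ km, IsGreatest {k : ℤ | k < 0 ∧ (n - r + k).gcd m = 1} km ∧ |km| ≤ m - 1 := by
  have hres := Int.emod_pos_of_gcd_eq_one hr hm
  have hres_lt := Int.emod_lt_of_pos r (by omega : 0 < m)
  have hmem : r % m - m ∈ {k : ℤ | k < 0 ∧ (n - r + k).gcd m = 1} :=
    ⟨by omega, gcd_sub_add_eq_one_of_modEq hn (by simp [Int.ModEq])⟩
  obtain ⟨km, hkm, hmax⟩ :=
    Int.exists_greatest_of_bdd ⟨0, fun _ hk ↦ hk.1.le⟩ ⟨_, hmem⟩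
  have hge : r % m - m ≤ km := hmax _ hmem
  exact ⟨km, ⟨hkm, hmax⟩, by rw [abs_of_neg hkm.1]; omega⟩

theorem stmt_7 (m : ℤ) (hm : 2 ≤ m) (ν : ℤ → ℝ)
    (h1 : ∀ n r kp : ℤ, Int.gcd n m = 1 → Int.gcd r m = 1 → r < n →
      IsLeast {k : ℤ | 0 ≤ k ∧ Int.gcd (n - r + k) m = 1} kp →
      |ν n - ν r - ((m : ℝ) - 1) * (n - r + kp - 1) / 2| ≤ ((kp : ℝ) + 1) * (m - 1) / 2)
    (h2 : ∀ n r km : ℤ, Int.gcd n m = 1 → Int.gcd r m = 1 → r < n →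
      IsGreatest {k : ℤ | k < 0 ∧ Int.gcd (n - r + k) m = 1} km → |km| ≤ m - 1 →
      |ν n - ν r - ((m : ℝ) - 1) * (n - r + km - 1) / 2| ≤ (|(km : ℝ)| + 1) * (m - 1) / 2) :
    ∀ n r : ℤ, Int.gcd n m = 1 → Int.gcd r m = 1 → r < n →
      -((m : ℝ) - 1) ≤ (ν n - ((m : ℝ) - 1) * n / 2) - (ν r - ((m : ℝ) - 1) * r / 2) ∧
        (ν n - ((m : ℝ) - 1) * n / 2) - (ν r - ((m : ℝ) - 1) * r / 2) ≤ 0 := by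
  intro n r hn hr hrn
  obtain ⟨kp, hkp⟩ := exists_isLeast_nonneg_gcd_sub_add_eq_one hn (by omega) r
  obtain ⟨km, hkm, hkm_abs⟩ := exists_isGreatest_neg_gcd_sub_add_eq_one hn hr hm
  have hlower := (abs_le.1 (h1 n r kp hn hr hrn hkp)).1
  have hupper := (abs_le.1 (h2 n r km hn hr hrn hkm hkm_abs)).2
  rw [abs_of_neg (Int.cast_lt_zero.2 hkm.1.1)] at hupper
  constructor <;> linarith
end

section
/- Suppose τ is a real-valued function of pairs (m,n) of coprime positive integers with m ≥ 2, and suppose: (i) for all r ∈ ℤ, m·T + m(m−1)r/2 ≤ τ(m, mr+1) ≤ m·T + m(m−1)r/2 + (m−1) for some fixed real T; (ii) the function h(n) := τ(m,n) − (m−1)n/2 is nonincreasing in n over integers coprime to m. Then for all n coprime to m, m·T + (m−1)(n−1)/2 ≤ τ(m,n) ≤ m·T + (m−1)(n+1)/2. -/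
theorem stmt_8 (m : ℤ) (hm : 2 ≤ m) (T : ℝ) (τ : ℤ → ℝ)
    (hi : ∀ r : ℤ, (m : ℝ) * T + (m : ℝ) * (m - 1) * r / 2 ≤ τ (m * r + 1) ∧
      τ (m * r + 1) ≤ (m : ℝ) * T + (m : ℝ) * (m - 1) * r / 2 + ((m : ℝ) - 1))
    (hii : ∀ n r : ℤ, Int.gcd n m = 1 → Int.gcd r m = 1 → r < n →
      τ n - ((m : ℝ) - 1) * n / 2 ≤ τ r - ((m : ℝ) - 1) * r / 2) :
    ∀ n : ℤ, Int.gcd n m = 1 →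
      (m : ℝ) * T + ((m : ℝ) - 1) * ((n : ℝ) - 1) / 2 ≤ τ n ∧
        τ n ≤ (m : ℝ) * T + ((m : ℝ) - 1) * ((n : ℝ) + 1) / 2 := by
  intro n hn
  have hgcd : ∀ s : ℤ, Int.gcd (m * s + 1) m = 1 := by
    intro s
    have : IsCoprime (m * s + 1) m := ⟨1, -s, by ring⟩
    exact Int.isCoprime_iff_gcd_eq_one.mp this
  have hnabs : (n.natAbs : ℤ) ≥ n ∧ -(n.natAbs : ℤ) ≤ n := by
    constructor <;> omega
  constructor
  · -- lower bound: use s = |n|+1, so n < m*s+1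
    set s : ℤ := (n.natAbs : ℤ) + 1 with hs
    have hlt : n < m * s + 1 := by nlinarith [hnabs.1]
    have h1 := hii (m * s + 1) n (hgcd s) hn hlt
    have h2 := (hi s).1
    have hcast : ((m * s + 1 : ℤ) : ℝ) = (m : ℝ) * (s : ℝ) + 1 := by push_cast; ring
    rw [hcast] at h1
    have key : (m : ℝ) * (m - 1) * s / 2 - ((m : ℝ) - 1) * ((m : ℝ) * s + 1) / 2
        = -((m : ℝ) - 1) / 2 := by ring
    linarith [key]
  · -- upper bound: use s = -(|n|+1), so m*s+1 < n
    set s : ℤ := -((n.natAbs : ℤ) + 1) with hs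
    have hlt : m * s + 1 < n := by nlinarith [hnabs.2]
    have h1 := hii n (m * s + 1) hn (hgcd s) hlt
    have h2 := (hi s).2
    have hcast : ((m * s + 1 : ℤ) : ℝ) = (m : ℝ) * (s : ℝ) + 1 := by push_cast; ring
    rw [hcast] at h1
    have key : (m : ℝ) * (m - 1) * s / 2 - ((m : ℝ) - 1) * ((m : ℝ) * s + 1) / 2
        = -((m : ℝ) - 1) / 2 := by ring
    linarith [key]
end

section
/- With m ≥ 2, T ∈ ℝ, and τ(m,·) defined on integers coprime to m, assume: (i) τ(m, mr+1) = m·T + m(m−1)r/2 for all r ∈ ℤ; (ii) h(n) := τ(m,n) − (m−1)n/2 is nonincreasing over integers coprime to m; and (iii) τ(m,n) ≥ m·T + (m−1)(n−1)/2 for all n coprime to m. Then τ(m,n) = m·T + (m−1)(n−1)/2 for all n coprime to m. -/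
/-! On the progression `m r + 1`, hypothesis (i) makes `h n = τ n - (m - 1) n / 2` equal to the
constant `m T - (m - 1) / 2`, which is exactly the lower bound (iii) rewritten in terms of `h`.
Every `n` coprime to `m` lies to the right of some point of the progression, so by monotonicity (ii)
`h n` is also at most that constant. -/

lemma Int.gcd_mul_add_one (m r : ℤ) : Int.gcd (m * r + 1) m = 1 :=
  Int.isCoprime_iff_gcd_eq_one.mp ⟨1, -r, by ring⟩

lemma Int.exists_mul_add_one_lt {m : ℤ} (hm : 0 < m) (n : ℤ) : ∃ r : ℤ, m * r + 1 < n :=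
  ⟨-(|n| + 2), by nlinarith [neg_abs_le n, abs_nonneg n]⟩

theorem stmt_9 (m : ℤ) (hm : 2 ≤ m) (T : ℝ) (τ : ℤ → ℝ)
    (hi : ∀ r : ℤ, τ (m * r + 1) = (m : ℝ) * T + (m : ℝ) * (m - 1) * r / 2)
    (hii : ∀ n r : ℤ, Int.gcd n m = 1 → Int.gcd r m = 1 → r < n →
      τ n - ((m : ℝ) - 1) * n / 2 ≤ τ r - ((m : ℝ) - 1) * r / 2)
    (hiii : ∀ n : ℤ, Int.gcd n m = 1 →
      (m : ℝ) * T + ((m : ℝ) - 1) * ((n : ℝ) - 1) / 2 ≤ τ n) :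
    ∀ n : ℤ, Int.gcd n m = 1 →
      τ n = (m : ℝ) * T + ((m : ℝ) - 1) * ((n : ℝ) - 1) / 2 := by
  intro n hn
  obtain ⟨r, hr⟩ := Int.exists_mul_add_one_lt (by omega : 0 < m) n
  have h_on_progression :
      τ (m * r + 1) - ((m : ℝ) - 1) * ↑(m * r + 1) / 2 = m * T - ((m : ℝ) - 1) / 2 := by
    rw [hi r]
    push_cast
    ring
  have h_le := hii n (m * r + 1) hn (Int.gcd_mul_add_one m r) hr
  linarith [hiii n hn]
end
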